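/- arXiv:2505.10763 — 5 statements merged into one kernel-verified Lean document; each statement's English description precedes it below -/
import Mathlib

section
/- The number of parking functions of size n is (n+1)^(n-1). -/
/-!
Pollak's circular argument. Put `n + 1` spots on a circle `ZMod (n + 1)` and let car `i` prefer
spot `-p i`. Then `p` is a parking function iff every arc `[0, k)` is preferred by fewer than `k`
cars. By the cycle lemma, every `f : Fin n → ZMod (n + 1)` has exactly one starting point `s` from
which all arcs `[s, s + k)` are underloaded, and translating `f` by `c` translates `s` by `c`. So
the `(n + 1) ^ n` preference functions are equidistributed over the `n + 1` starting points.
-/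

/-- The weakly increasing rearrangement of the entries of `p`. -/
def sortedOf {n : ℕ} (p : Fin n → ℕ) : List ℕ :=
  Multiset.sort (Multiset.ofList (List.ofFn p)) (· ≤ ·)

/-- A parking function of size `n` is a tuple of `n` positive integers such
that, after sorting weakly increasingly, the `i`-th smallest entry is at most `i`. -/
def IsParkingFunction {n : ℕ} (p : Fin n → ℕ) : Prop :=
  (∀ i, 0 < p i) ∧ ∀ i ∈ Finset.range n, (sortedOf p).getD i 0 ≤ i + 1

open Finset

theorem existsUnique_forall_lt_apply_add {m : ℕ} (hm : 0 < m) {P : ℕ → ℤ}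
    (hP : ∀ t, P (t + m) = P t + 1) :
    ∃! s, s < m ∧ ∀ k ∈ Icc 1 m, P s < P (s + k) := by
  -- the last point of `[0, m)` where `P` attains its minimum
  obtain ⟨s, hs, hmin⟩ :=
    (range m).exists_max_image (fun t => toLex (-P t, t)) ⟨0, mem_range.2 hm⟩
  simp only [mem_range, Prod.Lex.toLex_le_toLex, neg_lt_neg_iff, neg_inj] at hs hmin
  have hrec : ∀ k ∈ Icc 1 m, P s < P (s + k) := by
    intro k hk
    rw [mem_Icc] at hk
    rcases lt_or_ge (s + k) m with hsk | hsk
    · rcases hmin (s + k) hsk with h | ⟨h, h'⟩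
      · exact h
      · omega
    · have := hP (s + k - m)
      rw [Nat.sub_add_cancel hsk] at this
      rcases hmin (s + k - m) (by omega) with h | ⟨h, -⟩ <;> omega
  -- records at `a < b < a + m` would give `P a < P b < P (a + m) = P a + 1`
  have hcross {a b : ℕ} (hab : a < b) (hb : b < a + m) (ha : ∀ k ∈ Icc 1 m, P a < P (a + k))
      (hb' : ∀ k ∈ Icc 1 m, P b < P (b + k)) : False := by
    have h₁ := ha (b - a) (mem_Icc.2 (by omega))
    have h₂ := hb' (a + m - b) (mem_Icc.2 (by omega))
    rw [Nat.add_sub_cancel' hab.le] at h₁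
    rw [Nat.add_sub_cancel' (by omega), hP] at h₂
    omega
  refine ⟨s, ⟨hs, hrec⟩, fun s' ⟨hs', hrec'⟩ => ?_⟩
  by_contra hne
  rcases Nat.lt_or_gt_of_ne hne with h | h
  · exact hcross h (by omega) hrec' hrec
  · exact hcross h (by omega) hrec hrec'

theorem ZMod.sum_range_add_natCast {M : Type*} [AddCommMonoid M] {m : ℕ} [NeZero m]
    (g : ZMod m → M) (a : ZMod m) : ∑ j ∈ range m, g (a + j) = ∑ x, g x :=
  sum_nbij' (fun j => a + j) (fun x => (x - a).val) (by simp) (by simp [ZMod.val_lt])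
    (fun j hj => by simp [ZMod.val_cast_of_lt (mem_range.1 hj)]) (by simp) (by simp)

theorem ZMod.existsUnique_forall_sum_lt {m : ℕ} [NeZero m] (c : ZMod m → ℕ)
    (hc : ∑ x, c x + 1 = m) : ∃! s : ZMod m, ∀ k ∈ Icc 1 m, ∑ j ∈ range k, c (s + j) < k := by
  set P : ℕ → ℤ := fun t => t - ∑ j ∈ range t, (c j : ℤ)
  have hP (t k : ℕ) : P (t + k) = P t + k - ∑ j ∈ range k, c ((t : ZMod m) + j) := by
    simp only [P, sum_range_add, Nat.cast_add, Nat.cast_sum]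
    ring
  have hgood (t : ℕ) : (∀ k ∈ Icc 1 m, ∑ j ∈ range k, c ((t : ZMod m) + j) < k) ↔
      ∀ k ∈ Icc 1 m, P t < P (t + k) :=
    forall₂_congr fun k _ => by rw [hP]; omega
  have hper (t : ℕ) : P (t + m) = P t + 1 := by
    rw [hP, ZMod.sum_range_add_natCast]
    omega
  obtain ⟨t, ⟨-, hrec⟩, huniq⟩ := existsUnique_forall_lt_apply_add (NeZero.pos m) hper
  refine ⟨t, (hgood t).2 hrec, fun s hs => ?_⟩
  rw [← ZMod.natCast_zmod_val s, huniq s.val ⟨s.val_lt, (hgood _).1 (by simpa using hs)⟩]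

theorem Nat.card_subtype_mul_card_of_existsUnique {G X : Type*} [AddGroup G] [AddAction G X]
    (R : X → G → Prop) (hR : ∀ x, ∃! g, R x g)
    (hvadd : ∀ (c : G) x g, R (c +ᵥ x) (c + g) ↔ R x g) (g₀ : G) :
    Nat.card {x // R x g₀} * Nat.card G = Nat.card X := by
  choose σ hσ huniq using hR
  have hσvadd (c : G) (x : X) : σ (c +ᵥ x) = c + σ x :=
    (huniq _ _ ((hvadd c x (σ x)).2 (hσ x))).symm
  have hRσ (x : X) : R x g₀ ↔ σ x = g₀ := ⟨fun h => (huniq x g₀ h).symm, fun h => h ▸ hσ x⟩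
  rw [← Nat.card_prod]
  refine Nat.card_congr
    { toFun := fun xc => xc.2 +ᵥ xc.1.1
      invFun := fun y => (⟨(g₀ - σ y) +ᵥ y, (hRσ _).2 (by rw [hσvadd, sub_add_cancel])⟩, σ y - g₀)
      left_inv := fun ⟨⟨x, hx⟩, c⟩ => ?_
      right_inv := fun y => by simp [← add_vadd] }
  rw [hRσ] at hx
  ext <;> simp [hσvadd, hx, ← add_vadd, sub_eq_add_neg, add_assoc]

/-- `(f i - s).val < k` says that `f i` lies on the arc `[s, s + k)` of the circle `ZMod m`. -/
def IsSparseFrom {ι : Type*} [Fintype ι] {m : ℕ} (f : ι → ZMod m) (s : ZMod m) : Prop :=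
  ∀ k ∈ Icc 1 m, #{i | (f i - s).val < k} < k

section Sparse

variable {ι : Type*} [Fintype ι] {m : ℕ}

theorem card_val_sub_lt_eq_sum [NeZero m] (f : ι → ZMod m) (s : ZMod m) {k : ℕ} (hk : k ≤ m) :
    #{i | (f i - s).val < k} = ∑ j ∈ range k, #{i | f i = s + j} := by
  rw [card_eq_sum_card_fiberwise (f := fun i => (f i - s).val) (t := range k)
    (fun i hi => by simpa using hi)]
  refine sum_congr rfl fun j hj => congrArg card ?_
  rw [filter_filter]
  refine filter_congr fun i _ => ?_
  rw [mem_range] at hj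
  constructor
  · rintro ⟨-, h⟩
    rw [← h, ZMod.natCast_zmod_val, add_sub_cancel]
  · intro h
    rw [h, add_sub_cancel_left, ZMod.val_cast_of_lt (hj.trans_le hk)]
    exact ⟨hj, rfl⟩

theorem existsUnique_isSparseFrom [NeZero m] (f : ι → ZMod m) (hm : Fintype.card ι + 1 = m) :
    ∃! s, IsSparseFrom f s := by
  have hc : ∑ x, #{i | f i = x} + 1 = m := by
    rw [← card_eq_sum_card_fiberwise (by simp), card_univ, hm]
  refine (existsUnique_congr fun s => forall₂_congr fun k hk => ?_).1
    (ZMod.existsUnique_forall_sum_lt _ hc)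
  rw [card_val_sub_lt_eq_sum f s (mem_Icc.1 hk).2]

theorem isSparseFrom_vadd (c : ZMod m) (f : ι → ZMod m) (s : ZMod m) :
    IsSparseFrom (c +ᵥ f) (c + s) ↔ IsSparseFrom f s := by
  simp only [IsSparseFrom, Pi.vadd_apply, vadd_eq_add, add_sub_add_left_eq_sub]

end Sparse

theorem sortedOf_eq_ofFn {n : ℕ} (p : Fin n → ℕ) :
    sortedOf p = List.ofFn (p ∘ Tuple.sort p) := by
  refine List.Perm.eq_of_sortedLE (Multiset.pairwise_sort _ _).sortedLE
    (Tuple.monotone_sort p).sortedLE_ofFn ?_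
  refine List.Perm.trans ?_ ((Tuple.sort p).ofFn_comp_perm p).symm
  rw [← Multiset.coe_eq_coe, sortedOf, Multiset.sort_eq]

theorem isParkingFunction_iff_lt_card {n : ℕ} (p : Fin n → ℕ) :
    IsParkingFunction p ↔ (∀ i, 0 < p i) ∧ ∀ j : Fin n, (j : ℕ) < #{i | p i ≤ j + 1} := by
  refine and_congr_right fun _ => ?_
  have hcard (a : ℕ) : #{i | (p ∘ Tuple.sort p) i ≤ a} = #{i | p i ≤ a} :=
    card_equiv (Tuple.sort p) (by simp)
  simp only [sortedOf_eq_ofFn, mem_range, ← hcard,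
    Tuple.lt_card_le_iff_apply_le_of_monotone (Tuple.monotone_sort p)]
  rw [Fin.forall_iff]
  exact forall₂_congr fun i hi => by simp [List.getD_eq_getElem?_getD, hi]

theorem IsParkingFunction.apply_le {n : ℕ} {p : Fin n → ℕ} (hp : IsParkingFunction p)
    (i : Fin n) : p i ≤ n := by
  have hn : 0 < n := i.pos
  have h := ((isParkingFunction_iff_lt_card p).1 hp).2 ⟨n - 1, by omega⟩
  simp only [Nat.sub_add_cancel hn] at h
  have : #{j | p j ≤ n} = #(univ : Finset (Fin n)) :=
    le_antisymm (card_le_univ _) (by rw [card_univ, Fintype.card_fin]; omega)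
  exact (card_filter_eq_iff.1 this) i (mem_univ i)

theorem card_val_lt_add_card_val_neg_le {n : ℕ} {f : Fin n → ZMod (n + 1)} (hf : ∀ i, f i ≠ 0)
    {k : ℕ} (hk : k ≤ n + 1) : #{i | (f i).val < k} + #{i | (-f i).val ≤ n + 1 - k} = n := by
  have hval (i : Fin n) : (-f i).val = n + 1 - (f i).val := by rw [ZMod.neg_val, if_neg (hf i)]
  conv_rhs => rw [← Fintype.card_fin n, ← card_univ,
    ← card_filter_add_card_filter_not (fun i => (f i).val < k)]
  refine congrArg _ (congrArg card (filter_congr fun i _ => ?_))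
  rw [hval i]
  have := (f i).val_lt
  omega

theorem isParkingFunction_val_neg_iff {n : ℕ} (f : Fin n → ZMod (n + 1)) :
    IsParkingFunction (fun i => (-f i).val) ↔ IsSparseFrom f 0 := by
  simp only [isParkingFunction_iff_lt_card, IsSparseFrom, sub_zero, Nat.pos_iff_ne_zero, ne_eq,
    ZMod.val_eq_zero, neg_eq_zero, mem_Icc]
  constructor
  · rintro ⟨hf, hcard⟩ k ⟨hk₁, hk₂⟩
    have hsum := card_val_lt_add_card_val_neg_le hf hk₂
    rcases hk₂.lt_or_eq with hk | rfl
    · have := hcard ⟨n - k, by omega⟩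
      simp only [show n - k + 1 = n + 1 - k by omega] at this
      omega
    · have := card_le_univ (α := Fin n) {i | (f i).val < n + 1}
      simp only [Fintype.card_fin] at this
      omega
  · intro hs
    have hf (i : Fin n) : f i ≠ 0 := by
      have := filter_eq_empty_iff.1 (card_eq_zero.1 (Nat.lt_one_iff.1 (hs 1 ⟨le_rfl, by omega⟩)))
      simpa using this (mem_univ i)
    refine ⟨hf, fun j => ?_⟩
    have hsum := card_val_lt_add_card_val_neg_le hf (k := n - j) (by omega)
    have := hs (n - j) ⟨by omega, by omega⟩
    simp only [show n + 1 - (n - j) = j + 1 by omega] at hsum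
    omega

def parkingFunctionEquiv (n : ℕ) :
    {p : Fin n → ℕ // IsParkingFunction p} ≃ {f : Fin n → ZMod (n + 1) // IsSparseFrom f 0} where
  toFun p := ⟨fun i => -(p.1 i : ZMod (n + 1)), by
    rw [← isParkingFunction_val_neg_iff]
    convert p.2 using 2 with i
    rw [neg_neg, ZMod.val_cast_of_lt (Nat.lt_succ_of_le (p.2.apply_le i))]⟩
  invFun f := ⟨fun i => (-f.1 i).val, (isParkingFunction_val_neg_iff f.1).2 f.2⟩
  left_inv p := by
    ext i
    simp [ZMod.val_cast_of_lt (Nat.lt_succ_of_le (p.2.apply_le i))]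
  right_inv f := by
    ext i
    simp

/-- The number of parking functions of size `n` is `(n+1)^(n-1)`. -/
theorem card_parkingFunctions (n : ℕ) :
    Nat.card {p : Fin n → ℕ // IsParkingFunction p} = (n + 1) ^ (n - 1) := by
  have hcount :
      Nat.card {f : Fin n → ZMod (n + 1) // IsSparseFrom f 0} * (n + 1) = (n + 1) ^ n := by
    have := Nat.card_subtype_mul_card_of_existsUnique (G := ZMod (n + 1))
      (X := Fin n → ZMod (n + 1)) IsSparseFrom (fun f => existsUnique_isSparseFrom f (by simp))
      isSparseFrom_vadd 0
    simpa using this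
  have hpow : (n + 1) ^ n = (n + 1) ^ (n - 1) * (n + 1) := by
    rcases n with _ | n <;> simp [pow_succ]
  rw [Nat.card_congr (parkingFunctionEquiv n)]
  exact Nat.eq_of_mul_eq_mul_right n.succ_pos (hcount.trans hpow)
end

section
/- Let A(t) = ∑_{k≥1} P_{2k-1} t^{2k-1} and B(t) = ∑_{k≥1} P_{2k} t^{2k} be generating functions in the ring of symmetric functions, where P_m = (1/2) ∑_{i=0}^m h_i e_{m-i}. Then A^2 = B^2 + B. -/
/-!
Put `F(t) = ∑ₘ P_m tᵐ`, so that `2F = H(t) E(t)` for the generating functions `H` of the `h_i`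
and `E` of the `e_i`. Since `H(t) = ∏ᵢ 1/(1 - xᵢt)` and `E(t) = ∏ᵢ (1 + xᵢt)`, we have
`H(t) E(-t) = 1`, hence `4 F(t) F(-t) = 1`. Now `2A = F(t) - F(-t)` and `2B + 1 = F(t) + F(-t)`
(the constant term of `F` is `P_0 = 1/2`), so `(2B + 1)² - (2A)² = 4 F(t) F(-t) = 1`, which is
`4A² = 4B² + 4B`.
-/

open MvPolynomial Finset

variable (σ : Type*) [Fintype σ] [DecidableEq σ]

/-- The one-row Schur-P symmetric function `P_m = (1/2) ∑_{i=0}^m h_i e_{m-i}`. -/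
noncomputable def schurP (m : ℕ) : MvPolynomial σ ℚ :=
  (1 / 2 : ℚ) • ∑ i ∈ range (m + 1), hsymm σ ℚ i * esymm σ ℚ (m - i)

/-- The generating function `A(t) = ∑_{k ≥ 1} P_{2k-1} t^{2k-1}` of odd one-row
Schur-P functions. -/
noncomputable def genA : PowerSeries (MvPolynomial σ ℚ) :=
  PowerSeries.mk fun k => if Odd k then schurP σ k else 0

/-- The generating function `B(t) = ∑_{k ≥ 1} P_{2k} t^{2k}` of even one-row
Schur-P functions. -/
noncomputable def genB : PowerSeries (MvPolynomial σ ℚ) :=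
  PowerSeries.mk fun k => if Even k ∧ k ≠ 0 then schurP σ k else 0

theorem Multiset.prod_map_eq_prod_pow_count {ι M : Type*} [Fintype ι] [DecidableEq ι]
    [CommMonoid M] (s : Multiset ι) (f : ι → M) : (s.map f).prod = ∏ i, f i ^ s.count i := by
  rw [Finset.prod_multiset_map_count]
  exact prod_subset (subset_univ _) fun i _ hi => by
    rw [Multiset.count_eq_zero_of_notMem (by simpa using hi), pow_zero]

namespace PowerSeries

variable {R : Type*} [CommRing R]

theorem mk_pow_mul_one_sub_C_mul_X (a : R) : mk (a ^ ·) * (1 - C a * X) = 1 := by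
  simpa [rescale_mk] using congrArg (rescale a) (mk_one_mul_one_sub_eq_one (S := R))

theorem rescale_C (a b : R) : rescale a (C b) = C b := by
  ext (_ | n) <;> simp [coeff_C]

theorem coeff_two_mul (f : R⟦X⟧) (n : ℕ) : coeff n (2 * f) = 2 * coeff n f := by
  rw [two_mul, map_add, two_mul]

theorem coeff_evalNegHom (f : R⟦X⟧) (n : ℕ) : coeff n (evalNegHom f) = (-1) ^ n * coeff n f :=
  coeff_rescale f (-1) n

theorem evalNegHom_evalNegHom (f : R⟦X⟧) : evalNegHom (evalNegHom f) = f := by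
  simp [evalNegHom, rescale_rescale]

theorem evalNegHom_one_add_C_mul_X (a : R) : evalNegHom (1 + C a * X) = 1 - C a * X := by
  simp [evalNegHom, rescale_C, sub_eq_add_neg]

end PowerSeries

namespace MvPolynomial

variable {ι R : Type*} [Fintype ι] [CommRing R]

theorem mk_esymm_eq_prod :
    PowerSeries.mk (esymm ι R ·) = ∏ i, (1 + PowerSeries.C (X i) * PowerSeries.X) := by
  ext1 n
  simp only [prod_one_add, prod_mul_distrib, prod_const, ← map_prod, map_sum,
    PowerSeries.coeff_C_mul_X_pow, sum_ite, sum_const_zero, add_zero, PowerSeries.coeff_mk, esymm,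
    powersetCard_eq_filter, eq_comm (a := n)]

theorem mk_hsymm_eq_prod [DecidableEq ι] :
    PowerSeries.mk (hsymm ι R ·) = ∏ i, PowerSeries.mk (X i ^ ·) := by
  ext1 n
  simp only [PowerSeries.coeff_prod, PowerSeries.coeff_mk, hsymm]
  have mem_iff (l : ι →₀ ℕ) : l ∈ finsuppAntidiag univ n ↔ l.sum (fun _ => id) = n := by
    simp [Finsupp.sum_fintype, mem_finsuppAntidiag]
  refine sum_bij' (fun s _ => Multiset.toFinsupp s.1)
    (fun l hl => Sym.mk (Finsupp.toMultiset l) (by simpa using (mem_iff l).1 hl))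
    (fun s _ => (mem_iff _).2 (by simp)) (fun _ _ => mem_univ _) (fun s _ => by simp; rfl)
    (fun l _ => by simp) (fun s _ => ?_)
  simp [Multiset.prod_map_eq_prod_pow_count]

theorem mk_hsymm_mul_evalNegHom_mk_esymm [DecidableEq ι] :
    PowerSeries.mk (hsymm ι R ·) * PowerSeries.evalNegHom (PowerSeries.mk (esymm ι R ·)) = 1 := by
  rw [mk_hsymm_eq_prod, mk_esymm_eq_prod, map_prod, ← prod_mul_distrib]
  exact prod_eq_one fun i _ => by
    rw [PowerSeries.evalNegHom_one_add_C_mul_X, PowerSeries.mk_pow_mul_one_sub_C_mul_X]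

end MvPolynomial

section

open PowerSeries (mk evalNegHom)

theorem two_mul_schurP (m : ℕ) :
    2 * schurP σ m = ∑ i ∈ range (m + 1), hsymm σ ℚ i * esymm σ ℚ (m - i) := by
  rw [schurP, mul_smul_comm, two_mul, ← two_smul ℚ, smul_smul]
  norm_num

theorem two_mul_mk_schurP :
    2 * mk (schurP σ) = mk (hsymm σ ℚ ·) * mk (esymm σ ℚ ·) := by
  ext1 n
  rw [PowerSeries.coeff_two_mul, PowerSeries.coeff_mk, two_mul_schurP, PowerSeries.coeff_mul,
    Nat.sum_antidiagonal_eq_sum_range_succ_mk]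
  simp only [PowerSeries.coeff_mk]

theorem four_mul_mk_schurP_mul_evalNegHom :
    4 * (mk (schurP σ) * evalNegHom (mk (schurP σ))) = 1 := by
  set H := mk (hsymm σ ℚ ·)
  set E := mk (esymm σ ℚ ·)
  have hHE : H * evalNegHom E = 1 := mk_hsymm_mul_evalNegHom_mk_esymm
  have hEH : evalNegHom H * E = 1 := by
    simpa [PowerSeries.evalNegHom_evalNegHom] using congrArg evalNegHom hHE
  calc 4 * (mk (schurP σ) * evalNegHom (mk (schurP σ)))
      = (2 * mk (schurP σ)) * evalNegHom (2 * mk (schurP σ)) := by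
        rw [map_mul, map_ofNat]; ring
    _ = (H * evalNegHom E) * (evalNegHom H * E) := by
        rw [two_mul_mk_schurP, map_mul]; ring
    _ = 1 := by rw [hHE, hEH, one_mul]

theorem two_mul_genA :
    2 * genA σ = mk (schurP σ) - evalNegHom (mk (schurP σ)) := by
  ext1 k
  rw [PowerSeries.coeff_two_mul, map_sub, PowerSeries.coeff_evalNegHom, genA]
  simp only [PowerSeries.coeff_mk]
  rcases Nat.even_or_odd k with hk | hk
  · simp [hk.neg_one_pow, Nat.not_odd_iff_even.mpr hk]
  · simp [hk.neg_one_pow, hk]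
    ring

theorem two_mul_genB_add_one :
    2 * genB σ + 1 = mk (schurP σ) + evalNegHom (mk (schurP σ)) := by
  ext1 k
  rw [map_add, PowerSeries.coeff_two_mul, map_add, PowerSeries.coeff_evalNegHom, genB]
  simp only [PowerSeries.coeff_mk, PowerSeries.coeff_one]
  rcases eq_or_ne k 0 with rfl | hk0
  · simp [← two_mul, two_mul_schurP]
  rcases Nat.even_or_odd k with hk | hk
  · simp [hk, hk0, hk.neg_one_pow]
    ring
  · simp [hk0, Nat.not_even_iff_odd.mpr hk, hk.neg_one_pow]

end

/-- The identity `A² = B² + B` of formal power series with symmetric function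
coefficients. -/
theorem genA_sq_eq_genB_sq_add_genB :
    genA σ * genA σ = genB σ * genB σ + genB σ := by
  set F := PowerSeries.mk (schurP σ)
  have hfour : (4 : PowerSeries (MvPolynomial σ ℚ)) ≠ 0 := by
    intro h
    have := congrArg PowerSeries.constantCoeff h
    simp only [map_ofNat, map_zero] at this
    norm_num at this
  refine mul_left_cancel₀ hfour ?_
  linear_combination (2 * genA σ + F - PowerSeries.evalNegHom F) * two_mul_genA σ -
    (2 * genB σ + 1 + F + PowerSeries.evalNegHom F) * two_mul_genB_add_one σ -
    four_mul_mk_schurP_mul_evalNegHom σ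
end

section
/- For an odd partition μ of n with ℓ = ℓ(μ) parts, the odd Kreweras number satisfies OKrew(μ) = Krew(μ) · binom(n+ℓ, (n+ℓ)/2) / binom(n, (n+ℓ)/2), where Krew(μ) = (1/(n-ℓ+1)) · n! / (m_1(μ)! m_2(μ)! ⋯ m_n(μ)! (n-ℓ)!) and OKrew(μ) = (2^ℓ/ℓ!) · (ℓ! / ∏_{i odd} m_i(μ)!) · (n+ℓ-1)(n+ℓ-3)⋯(n-ℓ+3). -/
open Finset

/-- The Kreweras number of a partition `μ ⊢ n` with `ℓ` parts:
`Krew(μ) = (1/(n-ℓ+1)) · n! / (m_1! ⋯ m_n! (n-ℓ)!)`. -/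
noncomputable def krew (n : ℕ) (μ : n.Partition) : ℚ :=
  (1 / ((n : ℚ) - μ.parts.card + 1)) * (n.factorial : ℚ) /
    ((∏ i ∈ Icc 1 n, ((μ.parts.count i).factorial : ℚ)) *
      ((n - μ.parts.card).factorial : ℚ))

/-- The odd Kreweras number of an odd partition `μ ⊢ n` with `ℓ` parts:
`OKrew(μ) = (2^ℓ/ℓ!) · (ℓ!/∏_{i odd} m_i!) · (n+ℓ-1)(n+ℓ-3)⋯(n-ℓ+3)`. -/
noncomputable def okrew (n : ℕ) (μ : n.Partition) : ℚ :=
  (2 ^ μ.parts.card / (μ.parts.card.factorial : ℚ)) *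
    ((μ.parts.card.factorial : ℚ) /
      ∏ i ∈ (Icc 1 n).filter (fun i => Odd i), ((μ.parts.count i).factorial : ℚ)) *
    ∏ t ∈ range (μ.parts.card - 1), ((n : ℚ) + μ.parts.card - 1 - 2 * t)

/-! Write `n = ℓ + 2a` (an odd partition has `n ≡ ℓ mod 2`). Since only odd parts occur, the
two products of `m_i!` agree and cancel, and the binomial ratio equals
`(2a+2ℓ)! a! / ((a+ℓ)! n!)`. The identity then reduces to
`(2a+2ℓ)! a! = 2^ℓ (a+ℓ)! (2a+1)! · (2a+2ℓ-1)(2a+2ℓ-3)⋯(2a+3)`,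
which is the splitting of `(2a+2ℓ)!/(2a+1)!` into its even factors `2^ℓ (a+ℓ)!/a!` and its odd
factors. -/

open Nat

theorem Nat.doubleFactorial_add_two_mul {R : Type*} [CommRing R] (m k : ℕ) :
    ((m + 2 * k)‼ : R) = m‼ * ∏ t ∈ range k, ((m : R) + 2 * k - 2 * t) := by
  induction k with
  | zero => simp
  | succ k ih =>
    rw [show m + 2 * (k + 1) = m + 2 * k + 2 by ring, doubleFactorial_add_two, prod_range_succ',
      Nat.cast_mul, ih]
    push_cast
    ring_nf

theorem factorial_mul_factorial_eq_two_pow_mul_prod {R : Type*} [CommRing R] (a k : ℕ) :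
    ((2 * a + 2 * k + 2)! * a ! : R) =
      2 ^ (k + 1) * (a + k + 1)! * (2 * a + 1)! *
        ∏ t ∈ range k, ((2 * a + 1 : R) + 2 * k - 2 * t) := by
  have hoddFactors := Nat.doubleFactorial_add_two_mul (R := R) (2 * a + 1) k
  rw [factorial_eq_mul_doubleFactorial (2 * a + 2 * k + 1), factorial_eq_mul_doubleFactorial (2 * a),
    show 2 * a + 2 * k + 1 + 1 = 2 * (a + k + 1) by ring, doubleFactorial_two_mul,
    doubleFactorial_two_mul, show 2 * a + 2 * k + 1 = 2 * a + 1 + 2 * k by ring]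
  push_cast at hoddFactors ⊢
  rw [hoddFactors]
  ring

theorem Multiset.exists_sum_eq_card_add_two_mul {s : Multiset ℕ} (h : ∀ p ∈ s, Odd p) :
    ∃ a, s.sum = Multiset.card s + 2 * a := by
  induction s using Multiset.induction with
  | empty => exact ⟨0, by simp⟩
  | cons p s ih =>
    obtain ⟨c, rfl⟩ := h p (Multiset.mem_cons_self p s)
    obtain ⟨a, ha⟩ := ih fun q hq => h q (Multiset.mem_cons_of_mem hq)
    exact ⟨c + a, by simp only [Multiset.sum_cons, Multiset.card_cons, ha]; ring⟩

namespace Nat.Partition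

variable {n : ℕ} (μ : n.Partition)

theorem exists_eq_card_add_two_mul (hodd : ∀ p ∈ μ.parts, Odd p) :
    ∃ a, n = Multiset.card μ.parts + 2 * a := by
  simpa only [μ.parts_sum] using Multiset.exists_sum_eq_card_add_two_mul hodd

theorem prod_filter_odd_count {M : Type*} [CommMonoid M] (hodd : ∀ p ∈ μ.parts, Odd p)
    (s : Finset ℕ) (f : ℕ → M) (hf : f 0 = 1) :
    ∏ i ∈ s.filter Odd, f (μ.parts.count i) = ∏ i ∈ s, f (μ.parts.count i) := by
  refine prod_filter_of_ne fun i _ hi => hodd i (Multiset.count_ne_zero.mp fun h => hi ?_)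
  rw [h, hf]

end Nat.Partition

/-- For an odd partition `μ ⊢ n` with `ℓ` parts,
`OKrew(μ) = Krew(μ) · binom(n+ℓ, (n+ℓ)/2) / binom(n, (n+ℓ)/2)`. -/
theorem okrew_eq_krew_mul_ratio (n : ℕ) (μ : n.Partition)
    (hodd : ∀ p ∈ μ.parts, Odd p) :
    okrew n μ =
      krew n μ * ((n + μ.parts.card).choose ((n + μ.parts.card) / 2) : ℚ) /
        ((n.choose ((n + μ.parts.card) / 2)) : ℚ) := by
  obtain ⟨a, hn⟩ := μ.exists_eq_card_add_two_mul hodd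
  rw [okrew, krew, μ.prod_filter_odd_count hodd _ (fun m => (m ! : ℚ)) (by simp)]
  cases hℓ : μ.parts.card with
  | zero =>
    obtain rfl : n = 0 := by rw [← μ.parts_sum, Multiset.card_eq_zero.mp hℓ, Multiset.sum_zero]
    simp
  | succ k =>
    rw [hℓ] at hn
    subst hn
    rw [show k + 1 + 2 * a + (k + 1) = 2 * a + 2 * k + 2 by ring,
      show (2 * a + 2 * k + 2) / 2 = a + k + 1 by omega, Nat.add_sub_cancel,
      show k + 1 + 2 * a - (k + 1) = 2 * a by omega,
      Nat.cast_choose ℚ (by omega : a + k + 1 ≤ 2 * a + 2 * k + 2),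
      Nat.cast_choose ℚ (by omega : a + k + 1 ≤ k + 1 + 2 * a),
      show 2 * a + 2 * k + 2 - (a + k + 1) = a + k + 1 by omega,
      show k + 1 + 2 * a - (a + k + 1) = a by omega]
    have hprod : ∏ t ∈ range k, ((k + 1 + 2 * a : ℕ) + (k + 1 : ℕ) - 1 - 2 * t : ℚ) =
        ∏ t ∈ range k, ((2 * a + 1 : ℚ) + 2 * k - 2 * t) :=
      prod_congr rfl fun t _ => by push_cast; ring
    have hden : ((k + 1 + 2 * a : ℕ) : ℚ) - (k + 1 : ℕ) + 1 = 2 * a + 1 := by push_cast; ring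
    rw [hprod, hden]
    field_simp
    rw [factorial_mul_factorial_eq_two_pow_mul_prod, factorial_succ (2 * a)]
    push_cast
    ring
end

section
/- The number of sorted naive shifted parking functions of size n equals the n-th large Schröder number s_n. -/
/-!
Read a weakly increasing parking function `p` through its steps from `p (i - 1)` to `p i` (from
`0` for the first entry): a step either stays level or rises to a new value, and the rise onto
the value `k + 1` is the only one that can carry the sign `σ̄_k`. So sorted naive shifted parking
functions are the paths of level steps and signed rises whose heights `h₁, …, hₙ` satisfy
`1 ≤ hᵢ ≤ i`. Removing the first step of a path allowed to exceed the diagonal by `a - 1` gives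
the recursion of `slackCount`; an induction on the length shows
`slackCount n (a + 1) = ∑ sₖ · slackCount (n - k) a`, and with the Schröder recurrence this
yields `s (n + 1) = 2 · slackCount n 1`, the factor `2` being the sign of the forced first rise.
-/

open Finset

/-- The large Schröder numbers:
`s_0 = 1`, `s_1 = 2`, `s_n = 3 s_{n-1} + ∑_{k=1}^{n-2} s_k s_{n-k-1}`. -/
def schroeder : ℕ → ℕ
  | 0 => 1
  | 1 => 2
  | (n + 2) =>
      3 * schroeder (n + 1) +
        ∑ k ∈ (Icc 1 n).attach, schroeder k.1 * schroeder (n + 1 - k.1)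
  termination_by n => n
  decreasing_by
  · omega
  · have := k.2; rw [Finset.mem_Icc] at this; omega
  · have := k.2; rw [Finset.mem_Icc] at this; omega

/-- A sorted naive shifted parking function of size `n`: a pair `(p, σ̄)` with
`p` a weakly increasing parking function (each `p i` positive and at most `i`,
1-indexed) and `σ̄ ∈ {-1,0,1}ⁿ` (indexed by the values `1, …, n`) with
`σ̄_k = 0` iff no entry of `p` equals `k`. -/
def IsSortedNaiveShiftedPF (n : ℕ) (p : Fin n → ℕ) (σ : Fin n → ℤ) : Prop :=
  Monotone p ∧ (∀ i : Fin n, 0 < p i ∧ p i ≤ (i : ℕ) + 1) ∧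
    ∀ k : Fin n, (σ k = -1 ∨ σ k = 0 ∨ σ k = 1) ∧
      (σ k = 0 ↔ ∀ j : Fin n, p j ≠ (k : ℕ) + 1)

theorem schroeder_add_two (n : ℕ) :
    schroeder (n + 2) =
      2 * schroeder (n + 1) + ∑ p ∈ antidiagonal n, schroeder p.1 * schroeder (p.2 + 1) := by
  rw [schroeder, sum_attach (Icc 1 n) fun k => schroeder k * schroeder (n + 1 - k),
    ← Ico_add_one_right_eq_Icc, sum_Ico_eq_sum_range, Nat.sum_antidiagonal_eq_sum_range_succ_mk,
    sum_range_succ', Nat.add_sub_cancel]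
  have hterm : ∀ k ∈ range n, schroeder (1 + k) * schroeder (n + 1 - (1 + k)) =
      schroeder (k + 1) * schroeder (n - (k + 1) + 1) := fun k hk => by
    rw [mem_range] at hk
    rw [Nat.add_comm 1 k, show n + 1 - (k + 1) = n - (k + 1) + 1 by omega]
  rw [sum_congr rfl hterm]
  simp only [schroeder, Nat.sub_zero, one_mul]
  omega

section MonotoneTuple

variable {α : Type*} {n : ℕ}

theorem monotone_fin_cons [Preorder α] {a : α} {p : Fin n → α} (hp : Monotone p)
    (ha : ∀ i, a ≤ p i) : Monotone (Fin.cons a p : Fin (n + 1) → α) := by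
  intro i j hij
  cases i using Fin.cases with
  | zero => cases j using Fin.cases with
    | zero => exact le_rfl
    | succ j => simpa using ha j
  | succ i =>
    cases j using Fin.cases with
    | zero => exact absurd hij (Fin.succ_pos i).not_ge
    | succ j => simpa using hp (Fin.succ_le_succ_iff.1 hij)

theorem exists_rise_to [LinearOrder α] {q : Fin (n + 1) → α} (hq : Monotone q) {v : α}
    (h0 : q 0 < v) :
    ∀ j : Fin (n + 1), q j = v → ∃ i : Fin n, q i.castSucc < q i.succ ∧ q i.succ = v := by
  refine Fin.induction (fun h => absurd h h0.ne) fun i ih hi => ?_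
  by_cases hlt : q i.castSucc < v
  · exact ⟨i, hi ▸ hlt, hi⟩
  · exact ih (le_antisymm (hi ▸ hq i.castSucc_le_succ) (not_lt.1 hlt))

theorem flat_of_rise_to [PartialOrder α] {q : Fin (n + 1) → α} (hq : Monotone q) {i i' : Fin n}
    (hi : q i.castSucc < q i.succ) (hi' : q i'.succ = q i.succ) (hne : i' ≠ i) :
    q i'.castSucc = q i'.succ := by
  rcases hne.lt_or_gt with hlt | hlt
  · exact absurd ((hq (Fin.succ_le_castSucc_iff.2 hlt)).trans_lt hi) (hi' ▸ lt_irrefl _)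
  · exact le_antisymm (hq i'.castSucc_le_succ) (hi' ▸ hq (Fin.succ_le_castSucc_iff.2 hlt))

end MonotoneTuple

namespace SortedNaiveShiftedPF

/-- A step of a lattice path: `none` stays level, `some (b, j)` rises by `j + 1` and carries the
sign `b`. -/
abbrev Step : Type := Option (Bool × ℕ)

namespace Step

def rise : Step → ℕ
  | none => 0
  | some (_, j) => j + 1

def sign : Step → ℤ
  | none => 0
  | some (b, _) => if b then 1 else -1

@[simp] theorem rise_none : rise none = 0 := rfl
@[simp] theorem rise_some (b : Bool) (j : ℕ) : rise (some (b, j)) = j + 1 := rfl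
@[simp] theorem sign_none : sign none = 0 := rfl

theorem eq_none_of_rise_eq_zero {c : Step} (h : rise c = 0) : c = none := by
  rcases c with _ | ⟨b, j⟩
  · rfl
  · simp at h

end Step

section Height

variable {n : ℕ}

def height (d : Fin n → Step) : Fin (n + 1) → ℕ :=
  Fin.partialSum fun i => Step.rise (d i)

@[simp] theorem height_zero (d : Fin n → Step) : height d 0 = 0 :=
  Fin.partialSum_zero _

theorem height_succ (d : Fin n → Step) (i : Fin n) :
    height d i.succ = height d i.castSucc + Step.rise (d i) :=
  Fin.partialSum_succ _ i

theorem height_cons_succ (c : Step) (f : Fin n → Step) (i : Fin (n + 1)) :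
    height (Fin.cons c f) i.succ = Step.rise c + height f i :=
  Fin.partialSum_succ' _ i

theorem height_monotone (d : Fin n → Step) : Monotone (height d) :=
  Fin.monotone_iff_le_succ.2 fun i => by simp [height_succ]

theorem cons_zero_height_succ (d : Fin n → Step) :
    (Fin.cons 0 fun i => height d i.succ : Fin (n + 1) → ℕ) = height d := by
  rw [← height_zero d]
  exact Fin.cons_self_tail _

end Height

abbrev SlackPath (m a : ℕ) : Type :=
  {d : Fin m → Step // ∀ i : Fin m, height d i.succ ≤ i + a}

theorem forall_height_cons_le_iff {m : ℕ} (c : Step) (f : Fin m → Step) (a : ℕ) :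
    (∀ i : Fin (m + 1), height (Fin.cons c f) i.succ ≤ i + a) ↔
      Step.rise c ≤ a ∧ ∀ i : Fin m, height f i.succ ≤ i + (a + 1 - Step.rise c) := by
  rw [Fin.forall_fin_succ]
  simp only [height_cons_succ, height_zero, Fin.val_zero, Fin.val_succ]
  constructor <;> rintro ⟨h0, h⟩ <;> exact ⟨by omega, fun i => by have := h i; omega⟩

def slackPathSucc (m a : ℕ) :
    SlackPath m (a + 1) ⊕ (Σ j : Fin a, Bool × SlackPath m (a - j)) → SlackPath (m + 1) a
  | .inl f => ⟨Fin.cons none f.1, (forall_height_cons_le_iff _ _ _).2 ⟨Nat.zero_le a, f.2⟩⟩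
  | .inr ⟨j, b, f⟩ => ⟨Fin.cons (some (b, j)) f.1,
      (forall_height_cons_le_iff _ _ _).2 ⟨j.isLt, by simpa using f.2⟩⟩

theorem slackPathSucc_bijective (m a : ℕ) : Function.Bijective (slackPathSucc m a) := by
  constructor
  · rintro (⟨f, _⟩ | ⟨j, b, f, _⟩) (⟨g, _⟩ | ⟨k, c, g, _⟩) h
    all_goals
      simp only [slackPathSucc, Subtype.mk.injEq, Fin.cons_inj, reduceCtorEq, false_and,
        Option.some.injEq, Prod.mk.injEq] at h
    · obtain rfl := h.2; rfl
    · obtain ⟨⟨rfl, hjk⟩, rfl⟩ := h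
      obtain rfl := Fin.ext hjk
      rfl
  · rintro ⟨d, hd⟩
    rw [← Fin.cons_self_tail d, forall_height_cons_le_iff] at hd
    rcases hd0 : d 0 with _ | ⟨b, j⟩
    · rw [hd0] at hd
      exact ⟨.inl ⟨Fin.tail d, by simpa using hd.2⟩,
        Subtype.ext (by simp [slackPathSucc, ← hd0])⟩
    · rw [hd0] at hd
      refine ⟨.inr ⟨⟨j, hd.1⟩, b, ⟨Fin.tail d, by simpa using hd.2⟩⟩, ?_⟩
      exact Subtype.ext (by simp [slackPathSucc, ← hd0])

instance finite_slackPath : ∀ m a, Finite (SlackPath m a)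
  | 0, _ => Finite.of_subsingleton
  | m + 1, a =>
    have := finite_slackPath m
    .of_surjective _ (slackPathSucc_bijective m a).2

/-- Counts `SlackPath m a` by its first step: level (the slack becomes `a + 1`) or a rise by
`a - c` with either sign (the slack becomes `c + 1`). -/
def slackCount : ℕ → ℕ → ℕ
  | 0, _ => 1
  | m + 1, a => slackCount m (a + 1) + 2 * ∑ c ∈ range a, slackCount m (c + 1)

theorem slackCount_add_one_eq_sum (n : ℕ)
    (hs : ∀ k < n, schroeder (k + 1) = 2 * slackCount k 1) (a : ℕ) :
    slackCount n (a + 1) = ∑ p ∈ antidiagonal n, schroeder p.1 * slackCount p.2 a := by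
  induction n generalizing a with
  | zero => simp [slackCount, schroeder]
  | succ m ih =>
    have ih' := ih fun k hk => hs k (by omega)
    rw [slackCount, sum_range_succ', Nat.zero_add, ih', sum_congr rfl fun c _ => ih' (c + 1),
      mul_add, ← hs m (by omega), Nat.sum_antidiagonal_succ', sum_comm]
    simp only [slackCount, mul_add, mul_sum, sum_add_distrib, mul_left_comm (schroeder _) 2]
    ring

theorem schroeder_succ_eq_two_mul_slackCount (n : ℕ) :
    schroeder (n + 1) = 2 * slackCount n 1 := by
  induction n using Nat.strong_induction_on with
  | _ n ih =>
  rcases n with _ | m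
  · simp [slackCount, schroeder]
  rw [slackCount_add_one_eq_sum _ ih, Nat.sum_antidiagonal_succ', schroeder_add_two]
  simp only [slackCount, Nat.zero_add, sum_range_zero, Nat.mul_zero, Nat.add_zero, Nat.mul_one,
    mul_add, mul_sum]
  congr 1
  refine sum_congr rfl fun p hp => ?_
  rw [ih p.2 (Nat.antidiagonal.snd_lt hp), mul_left_comm]

theorem card_slackPath : ∀ m a, Nat.card (SlackPath m a) = slackCount m a
  | 0, _ => Nat.card_of_subsingleton ⟨Fin.elim0, fun i => i.elim0⟩
  | m + 1, a => by
    rw [← Nat.card_congr (Equiv.ofBijective _ (slackPathSucc_bijective m a)), Nat.card_sum,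
      Nat.card_sigma]
    simp only [Nat.card_prod, Nat.card_eq_fintype_card, Fintype.card_bool, card_slackPath m,
      slackCount, ← mul_sum]
    rw [Fin.sum_univ_eq_sum_range (fun j => slackCount m (a - j)), ← sum_range_reflect]
    congr 2
    refine sum_congr rfl fun j hj => ?_
    rw [mem_range] at hj
    congr 1
    omega

abbrev ParkingPath (n : ℕ) : Type :=
  {d : Fin n → Step // ∀ i : Fin n, 1 ≤ height d i.succ ∧ height d i.succ ≤ i + 1}

theorem forall_height_cons_parking_iff {m : ℕ} (c : Step) (f : Fin m → Step) :
    (∀ i : Fin (m + 1), 1 ≤ height (Fin.cons c f) i.succ ∧ height (Fin.cons c f) i.succ ≤ i + 1) ↔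
      Step.rise c = 1 ∧ ∀ i : Fin m, height f i.succ ≤ i + 1 := by
  rw [Fin.forall_fin_succ]
  simp only [height_cons_succ, height_zero, Fin.val_zero, Fin.val_succ]
  constructor <;> rintro ⟨h0, h⟩ <;> exact ⟨by omega, fun i => by have := h i; omega⟩

def parkingPathSucc (m : ℕ) : Bool × SlackPath m 1 → ParkingPath (m + 1)
  | (b, f) => ⟨Fin.cons (some (b, 0)) f.1, (forall_height_cons_parking_iff _ _).2 ⟨rfl, f.2⟩⟩

theorem parkingPathSucc_bijective (m : ℕ) : Function.Bijective (parkingPathSucc m) := by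
  constructor
  · rintro ⟨b, f, _⟩ ⟨c, g, _⟩ h
    simp only [parkingPathSucc, Subtype.mk.injEq, Fin.cons_inj, Option.some.injEq,
      Prod.mk.injEq, and_true] at h
    obtain ⟨rfl, rfl⟩ := h
    rfl
  · rintro ⟨d, hd⟩
    rw [← Fin.cons_self_tail d, forall_height_cons_parking_iff] at hd
    rcases hd0 : d 0 with _ | ⟨b, j⟩
    · simp [hd0] at hd
    · obtain rfl : j = 0 := by simpa [hd0] using hd.1
      exact ⟨(b, ⟨Fin.tail d, hd.2⟩), Subtype.ext (by simp [parkingPathSucc, ← hd0])⟩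

theorem card_parkingPath : ∀ n, Nat.card (ParkingPath n) = schroeder n
  | 0 => by rw [schroeder]; exact Nat.card_of_subsingleton ⟨Fin.elim0, fun i => i.elim0⟩
  | m + 1 => by
    rw [← Nat.card_congr (Equiv.ofBijective _ (parkingPathSucc_bijective m)), Nat.card_prod,
      Nat.card_eq_fintype_card (α := Bool), Fintype.card_bool, card_slackPath,
      schroeder_succ_eq_two_mul_slackCount]

section Encoding

variable {n : ℕ}

/-- Step `i` goes from the previous entry of `p` (or from `0`) to `p i`; a rise onto the value
`k + 1` carries the sign `σ k`. -/
noncomputable def encode (p : Fin n → ℕ) (σ : Fin n → ℤ) (i : Fin n) : Step :=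
  let prev := (Fin.cons 0 p : Fin (n + 1) → ℕ) i.castSucc
  if p i = prev then none
  else some (decide (Function.extend Fin.val σ 0 (p i - 1) = 1), p i - prev - 1)

/-- Of the steps ending at height `k + 1`, only the rise onto it can have a nonzero sign. -/
def decodeSign (d : Fin n → Step) (k : Fin n) : ℤ :=
  ∑ i with height d i.succ = k + 1, Step.sign (d i)

theorem height_encode {p : Fin n → ℕ} (hp : Monotone p) (σ : Fin n → ℤ) :
    height (encode p σ) = Fin.cons 0 p := by
  funext j
  induction j using Fin.induction with
  | zero => simp
  | succ i ih =>
    have hle := monotone_fin_cons hp (fun _ => Nat.zero_le _) i.castSucc_le_succ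
    rw [Fin.cons_succ] at hle
    rw [height_succ, ih, Fin.cons_succ, encode]
    split_ifs with h
    · simp [h]
    · simp only [Step.rise_some]
      omega

theorem decodeSign_eq_sign {d : Fin n → Step} {i : Fin n} {k : Fin n}
    (hi : height d i.castSucc < height d i.succ) (hk : height d i.succ = k + 1) :
    decodeSign d k = Step.sign (d i) := by
  refine sum_eq_single_of_mem i (by simpa using hk) fun i' hi' hne => ?_
  rw [mem_filter, ← hk] at hi'
  have hflat := flat_of_rise_to (height_monotone d) hi hi'.2 hne
  rw [height_succ, left_eq_add] at hflat
  rw [Step.eq_none_of_rise_eq_zero hflat, Step.sign_none]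

theorem decodeSign_eq_zero {d : Fin n → Step} {k : Fin n}
    (hk : ∀ i : Fin n, height d i.succ ≠ k + 1) : decodeSign d k = 0 :=
  sum_eq_zero fun i hi => absurd (mem_filter.1 hi).2 (hk i)

theorem isParkingPath_encode {p : Fin n → ℕ} {σ : Fin n → ℤ}
    (h : IsSortedNaiveShiftedPF n p σ) (i : Fin n) :
    1 ≤ height (encode p σ) i.succ ∧ height (encode p σ) i.succ ≤ i + 1 := by
  rw [height_encode h.1, Fin.cons_succ]
  exact h.2.1 i

theorem decodeSign_encode {p : Fin n → ℕ} {σ : Fin n → ℤ} (h : IsSortedNaiveShiftedPF n p σ) :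
    decodeSign (encode p σ) = σ := by
  obtain ⟨hp, -, hσ⟩ := h
  have hq := height_encode hp σ
  funext k
  by_cases hk : ∃ j, p j = k + 1
  · obtain ⟨j, hj⟩ := hk
    obtain ⟨i, hlt, hi⟩ := exists_rise_to (height_monotone (encode p σ)) (v := k + 1) (by simp)
      j.succ (by rw [hq, Fin.cons_succ, hj])
    rw [decodeSign_eq_sign hlt hi]
    rw [hq, Fin.cons_succ] at hlt hi
    have hσk : σ k ≠ 0 := fun h0 => (hσ k).2.1 h0 i hi
    rw [encode, if_neg hlt.ne', hi, Nat.add_sub_cancel, Fin.val_injective.extend_apply]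
    rcases (hσ k).1 with h1 | h1 | h1 <;> simp_all [Step.sign]
  · push Not at hk
    rw [decodeSign_eq_zero fun i => by rw [hq, Fin.cons_succ]; exact hk i]
    exact ((hσ k).2.2 hk).symm

theorem isSortedNaiveShiftedPF_decode {d : Fin n → Step}
    (hd : ∀ i : Fin n, 1 ≤ height d i.succ ∧ height d i.succ ≤ i + 1) :
    IsSortedNaiveShiftedPF n (fun i => height d i.succ) (decodeSign d) := by
  refine ⟨(height_monotone d).comp Fin.strictMono_succ.monotone, hd, fun k => ?_⟩
  by_cases hk : ∃ j : Fin n, height d j.succ = k + 1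
  · obtain ⟨j, hj⟩ := hk
    obtain ⟨i, hlt, hi⟩ := exists_rise_to (height_monotone d) (by simp) j.succ hj
    have hne : ¬∀ j : Fin n, height d j.succ ≠ k + 1 := fun hall => hall i hi
    rw [decodeSign_eq_sign hlt hi]
    rw [height_succ] at hlt
    rcases hdi : d i with _ | ⟨_ | _, _⟩ <;> simp_all [Step.sign]
  · push Not at hk
    simp [decodeSign_eq_zero hk, hk]

theorem encode_decode {d : Fin n → Step} (hd : ∀ i : Fin n, height d i.succ ≤ i + 1) :
    encode (fun i => height d i.succ) (decodeSign d) = d := by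
  funext i
  have hstep := height_succ d i
  simp only [encode, cons_zero_height_succ]
  rcases hdi : d i with _ | ⟨b, j⟩
  · rw [hdi, Step.rise_none, Nat.add_zero] at hstep
    exact if_pos hstep
  · rw [hdi, Step.rise_some] at hstep
    have hk : height d i.succ - 1 < n := by have := hd i; omega
    have hsign := decodeSign_eq_sign (d := d) (i := i) (k := ⟨_, hk⟩) (by omega) (by simp; omega)
    rw [if_neg (by omega), show height d i.succ - 1 = (⟨_, hk⟩ : Fin n) from rfl,
      Fin.val_injective.extend_apply, hsign, hdi]
    cases b <;> simp [Step.sign, hstep]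

noncomputable def equivParkingPath :
    {pσ : (Fin n → ℕ) × (Fin n → ℤ) // IsSortedNaiveShiftedPF n pσ.1 pσ.2} ≃ ParkingPath n where
  toFun x := ⟨encode x.1.1 x.1.2, isParkingPath_encode x.2⟩
  invFun d := ⟨(fun i => height d.1 i.succ, decodeSign d.1), isSortedNaiveShiftedPF_decode d.2⟩
  left_inv x := by
    obtain ⟨⟨p, σ⟩, h⟩ := x
    refine Subtype.ext (Prod.ext (funext fun i => ?_) (decodeSign_encode h))
    simp [height_encode h.1]
  right_inv d := Subtype.ext (encode_decode fun i => (d.2 i).2)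

end Encoding

end SortedNaiveShiftedPF

/-- The number of sorted naive shifted parking functions of size `n` is the
`n`-th large Schröder number. -/
theorem card_sortedNaiveShiftedPF (n : ℕ) :
    Nat.card {pσ : (Fin n → ℕ) × (Fin n → ℤ) //
        IsSortedNaiveShiftedPF n pσ.1 pσ.2} = schroeder n := by
  rw [Nat.card_congr SortedNaiveShiftedPF.equivParkingPath,
    SortedNaiveShiftedPF.card_parkingPath]
end

section
/- The Kreweras numbers sum to the Catalan number: for every n ≥ 1, ∑_{μ ⊢ n} (1/(n-ℓ(μ)+1)) · n!/(m_1(μ)! ⋯ m_n(μ)! (n-ℓ(μ))!) = C_n = (1/(n+1)) binom(2n,n), where the sum is over all partitions μ of n. -/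
/-!
Padding a partition `μ ⊢ n` with `n + 1 - ℓ(μ)` zero parts gives a multiset of `n + 1` elements
of `{0, …, n}` with sum `n`, and every such multiset arises exactly once. `Krew(μ)` is `1/(n+1)`
times the number of arrangements of the padded multiset, so by the multinomial theorem the
Kreweras numbers add up to `1/(n+1)` times the coefficient of `X^n` in `(1 + X + ⋯ + X^n)^(n+1)`.
Below degree `n + 1` this polynomial agrees with `(1 - X)^(-(n+1))`, whose `X^n` coefficient is
`binom(2n, n)`, and `binom(2n, n) / (n + 1) = C_n`.
-/

open Finset

open Nat

namespace Multiset

theorem prod_map_pow_eq_pow_sum {M : Type*} [CommMonoid M] (x : M) (s : Multiset ℕ) :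
    (s.map (x ^ ·)).prod = x ^ s.sum :=
  Multiset.induction_on s (by simp) fun a s ih => by simp [pow_add, ih]

variable {α : Type*} [DecidableEq α]

theorem countPerms_mul_prod_factorial_count (s : Multiset α) {t : Finset α}
    (hs : s.toFinset ⊆ t) : s.countPerms * ∏ a ∈ t, (s.count a)! = s.card ! := by
  have hsupp : s.toFinsupp.support ⊆ t := by simpa using hs
  rw [countPerms, Finsupp.multinomial_eq_of_support_subset hsupp, mul_comm]
  convert Nat.multinomial_spec t s.toFinsupp using 2
  · simp
  · simpa using (sum_count_eq_card fun a ha => hs (mem_toFinset.2 ha)).symm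

theorem countPerms_add_replicate {s : Multiset α} {a : α} (ha : a ∉ s) (r : ℕ) :
    (s + replicate r a).countPerms = (s.card + r).choose r * s.countPerms := by
  rw [countPerms_filter_ne a, filter_add, filter_eq_self.2 fun b hb => ?_,
    filter_eq_nil.2 fun b hb => ?_]
  · simp [count_eq_zero_of_notMem ha]
  · simp [eq_of_mem_replicate hb]
  · rintro rfl; exact ha hb

end Multiset

namespace PowerSeries

theorem coeff_sum_X_pow_pow {R : Type*} [CommSemiring R] (s : Finset ℕ) (r m : ℕ) :
    coeff m ((∑ i ∈ s, X ^ i : R⟦X⟧) ^ r) =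
      ∑ k ∈ (s.sym r).filter (fun k : Sym ℕ r => (k : Multiset ℕ).sum = m),
        ((k : Multiset ℕ).countPerms : R) := by
  rw [Finset.sum_pow, map_sum, sum_filter]
  refine sum_congr rfl fun k _ => ?_
  rw [Multiset.prod_map_pow_eq_pow_sum, ← map_natCast (C (R := R)), coeff_C_mul, coeff_X_pow]
  split_ifs <;> simp_all [eq_comm]

theorem coeff_geom_sum_pow {R : Type*} [CommRing R] {m N : ℕ} (hm : m < N) (d : ℕ) :
    coeff m ((∑ i ∈ range N, X ^ i : R⟦X⟧) ^ (d + 1)) = (d + m).choose d := by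
  obtain ⟨C, hC⟩ : (X : R⟦X⟧) ^ N ∣ 1 - (1 - X ^ N) ^ (d + 1) := by
    simpa using one_sub_dvd_one_sub_pow (1 - (X : R⟦X⟧) ^ N) (d + 1)
  set G : R⟦X⟧ := mk fun n => ((d + n).choose d : R)
  have hgeom : (∑ i ∈ range N, X ^ i : R⟦X⟧) ^ (d + 1) = (1 - X ^ N * C) * G := by
    calc (∑ i ∈ range N, X ^ i : R⟦X⟧) ^ (d + 1)
        = (∑ i ∈ range N, X ^ i : R⟦X⟧) ^ (d + 1) * (G * (1 - X) ^ (d + 1)) := by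
          rw [mk_add_choose_mul_one_sub_pow_eq_one, mul_one]
      _ = ((∑ i ∈ range N, X ^ i) * (1 - X)) ^ (d + 1) * G := by rw [mul_pow]; ring
      _ = (1 - X ^ N * C) * G := by rw [geom_sum_mul_neg, ← hC, sub_sub_cancel]
  rw [hgeom, sub_mul, one_mul, map_sub, mul_assoc, coeff_X_pow_mul', if_neg (by omega),
    sub_zero, coeff_mk]

end PowerSeries

namespace Nat.Partition

variable {n : ℕ}

theorem card_parts_le (μ : n.Partition) : μ.parts.card ≤ n := by
  simpa [μ.parts_sum] using Multiset.card_nsmul_le_sum fun _ hx => μ.parts_pos hx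

def padZeros (μ : n.Partition) : Sym ℕ (n + 1) :=
  ⟨μ.parts + Multiset.replicate (n + 1 - μ.parts.card) 0, by
    have := μ.card_parts_le
    simp only [Multiset.card_add, Multiset.card_replicate]
    omega⟩

theorem coe_padZeros (μ : n.Partition) :
    (μ.padZeros : Multiset ℕ) = μ.parts + Multiset.replicate (n + 1 - μ.parts.card) 0 :=
  rfl

theorem sum_padZeros {M : Type*} [AddCommMonoid M] (f : Sym ℕ (n + 1) → M) :
    ∑ μ : n.Partition, f μ.padZeros =
      ∑ k ∈ ((range (n + 1)).sym (n + 1)).filter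
        (fun k : Sym ℕ (n + 1) => (k : Multiset ℕ).sum = n), f k := by
  refine sum_bij' (fun μ _ => μ.padZeros) (fun k hk => ofSums n k (mem_filter.1 hk).2)
    (fun μ _ => ?_) (fun _ _ => mem_univ _) (fun μ _ => ?_) (fun k _ => ?_) (fun _ _ => rfl)
  · simp only [mem_filter, mem_sym_iff, ← Sym.mem_coe, coe_padZeros, Multiset.mem_add,
      Multiset.sum_add, Multiset.sum_replicate, smul_zero, add_zero, μ.parts_sum, and_true,
      mem_range]
    rintro a (ha | ha)
    · exact Nat.lt_succ_of_le (le_of_mem_parts ha)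
    · simp [Multiset.eq_of_mem_replicate ha]
  · ext1
    simp only [ofSums, coe_padZeros, Multiset.filter_add]
    rw [Multiset.filter_eq_self.2 fun a ha => (μ.parts_pos ha).ne',
      Multiset.filter_eq_nil.2 fun a ha => by simp [Multiset.eq_of_mem_replicate ha], add_zero]
  · ext1
    simp only [ofSums, coe_padZeros]
    have hcard := congrArg Multiset.card (Multiset.filter_add_not (· ≠ 0) (k : Multiset ℕ))
    rw [Multiset.card_add, Sym.card_coe] at hcard
    conv_rhs => rw [← Multiset.filter_add_not (· ≠ 0) (k : Multiset ℕ)]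
    refine congrArg _ (Multiset.eq_replicate.2 ⟨by omega, fun b hb => ?_⟩).symm
    simpa using (Multiset.mem_filter.1 hb).2

theorem countPerms_padZeros (μ : n.Partition) :
    (μ.padZeros : Multiset ℕ).countPerms =
      (n + 1).choose (n + 1 - μ.parts.card) * μ.parts.countPerms := by
  rw [coe_padZeros, Multiset.countPerms_add_replicate fun h => (μ.parts_pos h).ne' rfl,
    Nat.add_sub_cancel' (by have := μ.card_parts_le; omega)]

theorem krew_eq_countPerms_padZeros_div (μ : n.Partition) :
    krew n μ = (μ.padZeros : Multiset ℕ).countPerms / (n + 1) := by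
  set ℓ := μ.parts.card
  obtain ⟨r, hr⟩ : ∃ r, n = ℓ + r := Nat.exists_eq_add_of_le μ.card_parts_le
  have hperms := μ.parts.countPerms_mul_prod_factorial_count (t := Icc 1 n)
    fun a ha => mem_Icc.2 ⟨μ.parts_pos (Multiset.mem_toFinset.1 ha),
      le_of_mem_parts (Multiset.mem_toFinset.1 ha)⟩
  have hchoose := Nat.add_choose_mul_factorial_mul_factorial ℓ (r + 1)
  rw [show ℓ + (r + 1) = n + 1 by omega, Nat.factorial_succ, Nat.factorial_succ] at hchoose
  rw [countPerms_padZeros, krew, show n + 1 - ℓ = r + 1 by omega, show n - ℓ = r by omega,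
    show (n : ℚ) - ℓ + 1 = r + 1 by rw [hr]; push_cast; ring]
  have hchooseQ : ((n + 1).choose (r + 1) : ℚ) * ℓ ! * ((r + 1) * r !) = (n + 1) * n ! := by
    exact_mod_cast hchoose
  have hpermsQ : (μ.parts.countPerms : ℚ) * ∏ i ∈ Icc 1 n, ((μ.parts.count i)! : ℚ) = ℓ ! := by
    exact_mod_cast hperms
  have hP : (∏ i ∈ Icc 1 n, ((μ.parts.count i)! : ℚ)) ≠ 0 := by positivity
  field_simp
  push_cast
  linear_combination (-1 : ℚ) * hchooseQ - ((n + 1).choose (r + 1) * (r + 1) * r ! : ℚ) * hpermsQ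

end Nat.Partition

theorem sum_krew_eq_catalan_general (n : ℕ) :
    ∑ μ : n.Partition, krew n μ = (catalan n : ℚ) := by
  have hcoeff := PowerSeries.coeff_geom_sum_pow (R := ℚ) (Nat.lt_succ_self n) n
  rw [PowerSeries.coeff_sum_X_pow_pow, ← Nat.Partition.sum_padZeros] at hcoeff
  simp_rw [Nat.Partition.krew_eq_countPerms_padZeros_div, ← sum_div, hcoeff]
  rw [← two_mul, ← Nat.centralBinom_eq_two_mul_choose, ← succ_mul_catalan_eq_centralBinom]
  push_cast
  field_simp

/-- The Kreweras numbers of the partitions of `n` sum to the Catalan number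
`C_n = (1/(n+1)) binom(2n, n)`. -/
theorem sum_krew_eq_catalan (n : ℕ) (hn : 1 ≤ n) :
    ∑ μ : n.Partition, krew n μ = (catalan n : ℚ) :=
  sum_krew_eq_catalan_general n
end
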